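/- arXiv:1109.4428 — 3 statements merged into one kernel-verified Lean document; each statement's English description precedes it below -/
import Mathlib

section
/- Let k ≥ 1 and let 0 < γ < 1/4. There do not exist points p₁, p₂, q₁, q₂ on the unit sphere S^k ⊆ ℝ^{k+1} such that dist(p₁,p₂) ≥ 2 − γ, dist(q₁,q₂) ≥ 2 − γ, and dist(p_i, q_j) ≤ √2 − γ for all i, j ∈ {1,2}. -/
/-!
Put `s = p₁ + p₂` and `t = q₁ + q₂`. For unit vectors the parallelogram law gives
`‖s‖² = 4 - d(p₁,p₂)² ≤ 4γ - γ²`, and likewise for `t`, while `⟪s, t⟫` is the sum of the four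
cross inner products `⟪pᵢ, qⱼ⟫ = 1 - d(pᵢ,qⱼ)²/2 ≥ √2 γ - γ²/2`. Cauchy–Schwarz then forces
`4√2 γ - 2γ² ≤ 4γ - γ²`, i.e. `γ ≥ 4(√2 - 1) > 1/4`.
-/

open RealInnerProductSpace

section UnitVectors

variable {E : Type*} [NormedAddCommGroup E] [InnerProductSpace ℝ E]

lemma inner_eq_one_sub_dist_sq_div_two {x y : E} (hx : ‖x‖ = 1) (hy : ‖y‖ = 1) :
    ⟪x, y⟫ = 1 - dist x y ^ 2 / 2 := by
  rw [dist_eq_norm, norm_sub_sq_real, hx, hy]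
  ring

lemma norm_add_sq_eq_four_sub_dist_sq {x y : E} (hx : ‖x‖ = 1) (hy : ‖y‖ = 1) :
    ‖x + y‖ ^ 2 = 4 - dist x y ^ 2 := by
  rw [norm_add_sq_real, inner_eq_one_sub_dist_sq_div_two hx hy, hx, hy]
  ring

lemma eight_sub_two_mul_norm_add_le_sum_dist_sq {p₁ p₂ q₁ q₂ : E}
    (hp₁ : ‖p₁‖ = 1) (hp₂ : ‖p₂‖ = 1) (hq₁ : ‖q₁‖ = 1) (hq₂ : ‖q₂‖ = 1) :
    8 - 2 * (‖p₁ + p₂‖ * ‖q₁ + q₂‖) ≤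
      dist p₁ q₁ ^ 2 + dist p₁ q₂ ^ 2 + dist p₂ q₁ ^ 2 + dist p₂ q₂ ^ 2 := by
  have cauchy_schwarz := real_inner_le_norm (p₁ + p₂) (q₁ + q₂)
  simp only [inner_add_left, inner_add_right] at cauchy_schwarz
  rw [inner_eq_one_sub_dist_sq_div_two hp₁ hq₁, inner_eq_one_sub_dist_sq_div_two hp₁ hq₂,
    inner_eq_one_sub_dist_sq_div_two hp₂ hq₁, inner_eq_one_sub_dist_sq_div_two hp₂ hq₂]
    at cauchy_schwarz
  linarith

lemma norm_add_sq_le_of_le_dist {x y : E} (hx : ‖x‖ = 1) (hy : ‖y‖ = 1) {γ : ℝ}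
    (hγ : γ ≤ 2) (h : 2 - γ ≤ dist x y) :
    ‖x + y‖ ^ 2 ≤ 4 * γ - γ ^ 2 := by
  have := pow_le_pow_left₀ (by linarith) h 2
  rw [norm_add_sq_eq_four_sub_dist_sq hx hy]
  nlinarith

end UnitVectors

theorem stmt_0_general (k : ℕ) (γ : ℝ) (hγ0 : 0 < γ) (hγ : γ < 1/4)
    (p₁ p₂ q₁ q₂ : EuclideanSpace ℝ (Fin (k+1)))
    (hp₁ : ‖p₁‖ = 1) (hp₂ : ‖p₂‖ = 1) (hq₁ : ‖q₁‖ = 1) (hq₂ : ‖q₂‖ = 1)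
    (hpp : 2 - γ ≤ dist p₁ p₂) (hqq : 2 - γ ≤ dist q₁ q₂)
    (h11 : dist p₁ q₁ ≤ Real.sqrt 2 - γ) (h12 : dist p₁ q₂ ≤ Real.sqrt 2 - γ)
    (h21 : dist p₂ q₁ ≤ Real.sqrt 2 - γ) (h22 : dist p₂ q₂ ≤ Real.sqrt 2 - γ) :
    False := by
  have hs := norm_add_sq_le_of_le_dist hp₁ hp₂ (by linarith) hpp
  have ht := norm_add_sq_le_of_le_dist hq₁ hq₂ (by linarith) hqq
  have hst : ‖p₁ + p₂‖ * ‖q₁ + q₂‖ ≤ 4 * γ - γ ^ 2 := by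
    linarith [two_mul_le_add_sq ‖p₁ + p₂‖ ‖q₁ + q₂‖]
  have hcross := eight_sub_two_mul_norm_add_le_sum_dist_sq hp₁ hp₂ hq₁ hq₂
  have h11 := pow_le_pow_left₀ dist_nonneg h11 2
  have h12 := pow_le_pow_left₀ dist_nonneg h12 2
  have h21 := pow_le_pow_left₀ dist_nonneg h21 2
  have h22 := pow_le_pow_left₀ dist_nonneg h22 2
  have hsqrt2 : Real.sqrt 2 ^ 2 = 2 := Real.sq_sqrt zero_le_two
  have hsqrt2_gt : (17 / 16 : ℝ) < Real.sqrt 2 := by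
    rw [Real.lt_sqrt (by norm_num)]; norm_num
  -- what remains is `8 (√2 - 1) γ ≤ 2 γ²`
  nlinarith

/-- Property (P4): for `0 < γ < 1/4` there are no four points on the unit sphere
`S^k ⊆ ℝ^{k+1}` with `d(p₁,p₂) ≥ 2-γ`, `d(q₁,q₂) ≥ 2-γ` and all cross distances
at most `√2 - γ`. -/
theorem stmt_0 (k : ℕ) (hk : 1 ≤ k) (γ : ℝ) (hγ0 : 0 < γ) (hγ : γ < 1/4)
    (p₁ p₂ q₁ q₂ : EuclideanSpace ℝ (Fin (k+1)))
    (hp₁ : ‖p₁‖ = 1) (hp₂ : ‖p₂‖ = 1) (hq₁ : ‖q₁‖ = 1) (hq₂ : ‖q₂‖ = 1)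
    (hpp : 2 - γ ≤ dist p₁ p₂) (hqq : 2 - γ ≤ dist q₁ q₂)
    (h11 : dist p₁ q₁ ≤ Real.sqrt 2 - γ) (h12 : dist p₁ q₂ ≤ Real.sqrt 2 - γ)
    (h21 : dist p₂ q₁ ≤ Real.sqrt 2 - γ) (h22 : dist p₂ q₂ ≤ Real.sqrt 2 - γ) :
    False :=
  stmt_0_general k γ hγ0 hγ p₁ p₂ q₁ q₂ hp₁ hp₂ hq₁ hq₂ hpp hqq h11 h12 h21 h22
end

section
/- Let r ≥ 2, β > 0, z a positive integer, and let G be a graph on vertex set A₁ ∪ … ∪ A_r (disjoint sets, each contained in a ground set of size z), with all edges going between distinct parts. Assume that for every i ≠ j and every pair of subsets B ⊆ A_i, B' ⊆ A_j with |B|, |B'| ≥ β·z, there is an edge of G between B and B'. If |A_i| ≥ 2^r β z for all i and T is a tree on vertex set {1,…,r}, then there exist vertices p₁ ∈ A₁, …, p_r ∈ A_r such that for every edge ij of T, p_i p_j ∈ E(G). -/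
/-!
Remove a leaf `v` of the tree, with neighbour `u`. The vertices of `A u` without a neighbour in
`A v` form, together with `A v`, a pair of sets spanning no edge, so there are fewer than `m` of
them. Discarding them shrinks `A u` by less than `m`, so the bound `|A i| ≥ |T| m` passes to the
smaller tree, and an embedding of it into the pruned sets extends to `v`. Finally `r ≤ 2 ^ r`.
-/

open Finset

lemma natCard_compl_singleton_add_one {ι : Type*} [Finite ι] (v : ι) :
    Nat.card ↥({v}ᶜ : Set ι) + 1 = Nat.card ι := by
  rw [Nat.card_coe_set_eq, ← Set.ncard_singleton v, Set.ncard_compl_add_ncard]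

namespace SimpleGraph

variable {ι V : Type*}

def LargeSubsetsAdj (G : SimpleGraph V) (m : ℝ) (B C : Finset V) : Prop :=
  ∀ B' ⊆ B, ∀ C' ⊆ C, m ≤ #B' → m ≤ #C' → ∃ b ∈ B', ∃ c ∈ C', G.Adj b c

variable {G : SimpleGraph V} {m : ℝ}

lemma LargeSubsetsAdj.mono {B B' C C' : Finset V} (h : G.LargeSubsetsAdj m B C)
    (hB : B' ⊆ B) (hC : C' ⊆ C) : G.LargeSubsetsAdj m B' C' :=
  fun B'' hB'' C'' hC'' => h B'' (hB''.trans hB) C'' (hC''.trans hC)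

open Classical in
lemma LargeSubsetsAdj.card_sub_lt_card_filter {B C : Finset V} (h : G.LargeSubsetsAdj m B C)
    (hC : m ≤ #C) : (#B : ℝ) - m < #{b ∈ B | ∃ c ∈ C, G.Adj b c} := by
  have hbad : (#{b ∈ B | ¬∃ c ∈ C, G.Adj b c} : ℝ) < m := by
    refine lt_of_not_ge fun hle => ?_
    obtain ⟨b, hb, c, hc, hbc⟩ := h _ (filter_subset _ _) C subset_rfl hle hC
    exact (mem_filter.1 hb).2 ⟨c, hc, hbc⟩
  have hsplit := card_filter_add_card_filter_not (s := B) (fun b => ∃ c ∈ C, G.Adj b c)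
  have hsplitR : ((#{b ∈ B | ∃ c ∈ C, G.Adj b c} + #{b ∈ B | ¬∃ c ∈ C, G.Adj b c} : ℕ) : ℝ) = #B :=
    congrArg Nat.cast hsplit
  push_cast at hsplitR
  linarith

lemma IsTree.induce_compl_singleton {T : SimpleGraph ι} (hT : T.IsTree) {v : ι}
    [Fintype (T.neighborSet v)] (hv : T.degree v = 1) : (T.induce {v}ᶜ).IsTree :=
  ⟨hT.connected.induce_compl_singleton_of_degree_eq_one hv, hT.isAcyclic.induce _⟩

lemma exists_hom_extend_of_unique_adj {T : SimpleGraph ι} {u v : ι} (hvu : T.Adj v u)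
    (hu : ∀ w, T.Adj v w → w = u) (f : T.induce {v}ᶜ →g G) {c : V}
    (hc : G.Adj (f ⟨u, hvu.ne.symm⟩) c) :
    ∃ g : T →g G, g v = c ∧ ∀ i (hi : i ≠ v), g i = f ⟨i, hi⟩ := by
  classical
  refine ⟨⟨fun i => if h : i = v then c else f ⟨i, h⟩, fun {i j} hij => ?_⟩, by simp,
    fun i hi => by simp [hi]⟩
  by_cases hi : i = v <;> by_cases hj : j = v <;> subst_vars
  · exact (hij.ne rfl).elim
  · obtain rfl := hu j hij
    simpa [hj] using hc.symm
  · obtain rfl := hu i hij.symm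
    simpa [hi] using hc
  · simpa [hi, hj] using f.map_adj (show (T.induce {v}ᶜ).Adj ⟨i, hi⟩ ⟨j, hj⟩ from hij)

theorem IsTree.exists_hom_forall_mem [Finite ι] {T : SimpleGraph ι} (hT : T.IsTree)
    (G : SimpleGraph V) (A : ι → Finset V) (hm : 0 < m)
    (hA : ∀ i j, T.Adj i j → G.LargeSubsetsAdj m (A i) (A j))
    (hcard : ∀ i, Nat.card ι * m ≤ #(A i)) : ∃ f : T →g G, ∀ i, f i ∈ A i := by
  induction ι using Finite.induction_subsingleton_or_nontrivial with
  | hbase ι =>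
    have hne : ∀ i, (A i).Nonempty := fun i => by
      rw [← card_pos, ← Nat.cast_pos (α := ℝ)]
      have : Nonempty ι := ⟨i⟩
      exact (mul_pos (Nat.cast_pos.2 Nat.card_pos) hm).trans_le (hcard i)
    exact ⟨⟨fun i => (hne i).choose, fun h => (h.ne (Subsingleton.elim _ _)).elim⟩,
      fun i => (hne i).choose_spec⟩
  | hstep ι ih =>
    classical
    have := Fintype.ofFinite ι
    obtain ⟨v, hv⟩ := hT.exists_vert_degree_one_of_nontrivial
    obtain ⟨u, hvu, hu⟩ := degree_eq_one_iff_existsUnique_adj.1 hv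
    let A' : ↥({v}ᶜ : Set ι) → Finset V := fun i => {b ∈ A i | T.Adj i v → ∃ c ∈ A v, G.Adj b c}
    have hA'card : ∀ i : ↥({v}ᶜ : Set ι), (#(A i) : ℝ) - m < #(A' i) := by
      intro i
      by_cases hiv : T.Adj i v
      · simpa [A', hiv] using (hA i v hiv).card_sub_lt_card_filter
          ((le_mul_of_one_le_left hm.le (by exact_mod_cast Nat.card_pos)).trans (hcard v))
      · simpa [A', hiv] using hm
    have hcard' := natCard_compl_singleton_add_one v
    have hcardR : (Nat.card ι : ℝ) = Nat.card ↥({v}ᶜ : Set ι) + 1 := by exact_mod_cast hcard'.symm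
    obtain ⟨f', hf'⟩ := ih _ (by omega) (hT.induce_compl_singleton hv) A'
      (fun i j hij => (hA i j hij).mono (filter_subset _ _) (filter_subset _ _))
      (fun i => by linarith [hcardR ▸ hcard i, hA'card i])
    obtain ⟨c, hc, hfc⟩ := (mem_filter.1 (hf' ⟨u, hvu.ne.symm⟩)).2 hvu.symm
    obtain ⟨f, hfv, hf⟩ := exists_hom_extend_of_unique_adj hvu hu f' hfc
    refine ⟨f, fun i => ?_⟩
    by_cases hi : i = v
    · exact hi ▸ hfv ▸ hc
    · exact hf i hi ▸ filter_subset _ _ (hf' ⟨i, hi⟩)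

end SimpleGraph

theorem stmt_6_general {V : Type*} (r : ℕ)
    (β : ℝ) (hβ : 0 < β) (z : ℕ) (hz : 0 < z)
    (A : Fin r → Finset V)
    (G : SimpleGraph V)
    (hcross : ∀ i j : Fin r, i ≠ j → ∀ B ⊆ A i, ∀ B' ⊆ A j,
      β * z ≤ (B.card : ℝ) → β * z ≤ (B'.card : ℝ) →
      ∃ b ∈ B, ∃ b' ∈ B', G.Adj b b')
    (hsize : ∀ i, (2 : ℝ) ^ r * β * z ≤ ((A i).card : ℝ))
    (T : SimpleGraph (Fin r)) (hT : T.IsTree) :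
    ∃ p : Fin r → V, (∀ i, p i ∈ A i) ∧ ∀ i j, T.Adj i j → G.Adj (p i) (p j) := by
  have hβz : 0 < β * z := mul_pos hβ (Nat.cast_pos.2 hz)
  have hr : (r : ℝ) ≤ 2 ^ r := by exact_mod_cast Nat.lt_two_pow_self.le
  obtain ⟨f, hf⟩ := hT.exists_hom_forall_mem G A hβz
    (fun i j hij => hcross i j hij.ne)
    fun i => calc
      (Nat.card (Fin r) : ℝ) * (β * z) = r * (β * z) := by rw [Nat.card_fin]
      _ ≤ 2 ^ r * (β * z) := by gcongr
      _ ≤ #(A i) := by simpa only [mul_assoc] using hsize i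
  exact ⟨f, hf, fun i j hij => f.map_adj hij⟩

/-- Abstract form of the tree-embedding lemma: parts `A₁,…,A_r` in a ground set of size `z`,
any two sets of size `≥ βz` on different parts span an edge of `G`, all edges of `G` go between
distinct parts, and `|A_i| ≥ 2^r β z`. Then any tree `T` on `{1,…,r}` embeds with vertex `i`
going to `A_i`. -/
theorem stmt_6 {V : Type*} [Fintype V] [DecidableEq V] (r : ℕ) (hr : 2 ≤ r)
    (β : ℝ) (hβ : 0 < β) (z : ℕ) (hz : 0 < z) (hV : Fintype.card V = z)
    (A : Fin r → Finset V) (hdisj : ∀ i j, i ≠ j → Disjoint (A i) (A j))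
    (G : SimpleGraph V)
    (hbetween : ∀ v w, G.Adj v w → ∀ i : Fin r, ¬(v ∈ A i ∧ w ∈ A i))
    (hcross : ∀ i j : Fin r, i ≠ j → ∀ B ⊆ A i, ∀ B' ⊆ A j,
      β * z ≤ (B.card : ℝ) → β * z ≤ (B'.card : ℝ) →
      ∃ b ∈ B, ∃ b' ∈ B', G.Adj b b')
    (hsize : ∀ i, (2 : ℝ) ^ r * β * z ≤ ((A i).card : ℝ))
    (T : SimpleGraph (Fin r)) (hT : T.IsTree) :
    ∃ p : Fin r → V, (∀ i, p i ∈ A i) ∧ ∀ i j, T.Adj i j → G.Adj (p i) (p j) :=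
  stmt_6_general r β hβ z hz A G hcross hsize T hT
end

section
/- (Dependent random choice) Let a, m, n, r, t be positive integers and let G be a graph on n vertices with average degree d = 2|E(G)|/n. If d^t/n^{t−1} − C(n,r)·(m/n)^t ≥ a, then G contains a set U of at least a vertices such that every r-element subset of U has at least m common neighbors. -/
/-!
Pick a uniformly random `t`-tuple of vertices and let `X` be its common neighborhood. A vertex
lies in `X` exactly when all `t` entries are among its neighbors, so `𝔼|X| = ∑ deg(v)^t / n^t`,
which by Jensen is at least `d^t / n^(t-1)`. An `r`-set `S` with fewer than `m` common neighbors
lies in `X` only if all entries are common neighbors of `S`, which has probability less than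
`(m/n)^t`; so the expected number of such bad sets inside `X` is at most `C(n,r) (m/n)^t`.
Some tuple therefore has `|X| - #bad ≥ a`, and deleting one vertex from each bad set inside `X`
leaves the required `U`.
-/

open Finset

theorem Finset.exists_subset_le_card_add_card_forall_not_subset {α : Type*} [DecidableEq α]
    (X : Finset α) (𝓑 : Finset (Finset α)) (h𝓑 : ∀ B ∈ 𝓑, B.Nonempty) :
    ∃ U ⊆ X, #X ≤ #U + #𝓑 ∧ ∀ B ∈ 𝓑, ¬B ⊆ U := by
  choose φ hφ using h𝓑
  set D := 𝓑.attach.image fun B => φ B.1 B.2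
  refine ⟨X \ D, sdiff_subset, ?_, fun B hB hBU => ?_⟩
  · calc #X ≤ #(X \ D) + #D := card_le_card_sdiff_add_card
      _ ≤ #(X \ D) + #𝓑 := by
        gcongr
        exact card_image_le.trans card_attach.le
  · exact (mem_sdiff.1 (hBU (hφ B hB))).2 (mem_image.2 ⟨⟨B, hB⟩, mem_attach _ _, rfl⟩)

theorem Fintype.card_filter_forall_mem {α : Type*} [Fintype α] [DecidableEq α]
    (s : Finset α) (t : ℕ) : #{f : Fin t → α | ∀ i, f i ∈ s} = #s ^ t := by
  have : ({f : Fin t → α | ∀ i, f i ∈ s} : Finset _) = Fintype.piFinset fun _ => s := by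
    ext f
    simp [Fintype.mem_piFinset]
  rw [this, Fintype.card_piFinset]
  simp

namespace SimpleGraph

variable {V : Type*} [Fintype V] (G : SimpleGraph V) [DecidableRel G.Adj]

lemma averageDegree_pow_mul_card_le_sum_degree_pow (t : ℕ) :
    (2 * #G.edgeFinset / Fintype.card V : ℝ) ^ t * Fintype.card V ≤
      ∑ v, (G.degree v : ℝ) ^ t := by
  rcases t with _ | k
  · simp
  rcases (Fintype.card V).eq_zero_or_pos with hV | hV
  · simp only [hV, Nat.cast_zero, mul_zero]
    positivity
  have hsum : (2 * #G.edgeFinset : ℝ) = ∑ v, (G.degree v : ℝ) := by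
    exact_mod_cast G.sum_degrees_eq_twice_card_edges.symm
  calc (2 * #G.edgeFinset / Fintype.card V : ℝ) ^ (k + 1) * Fintype.card V
      = (∑ v, (G.degree v : ℝ)) ^ (k + 1) / #(univ : Finset V) ^ k := by
        have : (Fintype.card V : ℝ) ≠ 0 := by positivity
        rw [hsum, card_univ, div_pow, pow_succ (Fintype.card V : ℝ)]
        field_simp
    _ ≤ ∑ v, (G.degree v : ℝ) ^ (k + 1) := pow_sum_div_card_le_sum_pow (fun v _ => by positivity) k

variable [DecidableEq V]

-- `[DecidableEq V]` matters here: it changes the instance deciding `∀ s ∈ S, _`.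
def commonNeighborFinset (S : Finset V) : Finset V :=
  univ.filter fun v => ∀ s ∈ S, G.Adj v s

variable {G}

@[simp]
lemma mem_commonNeighborFinset {S : Finset V} {v : V} :
    v ∈ G.commonNeighborFinset S ↔ ∀ s ∈ S, G.Adj v s := by
  simp [commonNeighborFinset]

lemma subset_commonNeighborFinset_comm {S T : Finset V} :
    S ⊆ G.commonNeighborFinset T ↔ T ⊆ G.commonNeighborFinset S := by
  simp only [subset_iff, mem_commonNeighborFinset]
  exact ⟨fun h t ht s hs => (h hs t ht).symm, fun h s hs t ht => (h ht s hs).symm⟩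

lemma sum_card_commonNeighborFinset_image (t : ℕ) :
    ∑ f : Fin t → V, #(G.commonNeighborFinset (univ.image f)) = ∑ v, G.degree v ^ t := by
  set r : (Fin t → V) → V → Prop := fun f v => v ∈ G.commonNeighborFinset (univ.image f)
  calc ∑ f : Fin t → V, #(G.commonNeighborFinset (univ.image f))
      = ∑ f : Fin t → V, #(univ.bipartiteAbove r f) := by
        simp only [r, bipartiteAbove, filter_mem_eq_inter, univ_inter]
    _ = ∑ v, #(univ.bipartiteBelow r v) := sum_card_bipartiteAbove_eq_sum_card_bipartiteBelow _
    _ = ∑ v, G.degree v ^ t := sum_congr rfl fun v _ => by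
        rw [← card_neighborFinset_eq_degree, ← Fintype.card_filter_forall_mem]
        simp [r, bipartiteBelow]

lemma sum_card_filter_subset_commonNeighborFinset_image (𝓑 : Finset (Finset V)) (t : ℕ) :
    ∑ f : Fin t → V, #{S ∈ 𝓑 | S ⊆ G.commonNeighborFinset (univ.image f)} =
      ∑ S ∈ 𝓑, #(G.commonNeighborFinset S) ^ t := by
  refine (sum_card_bipartiteAbove_eq_sum_card_bipartiteBelow
    (r := fun f S => S ⊆ G.commonNeighborFinset (univ.image f))).trans (sum_congr rfl fun S _ => ?_)
  rw [← Fintype.card_filter_forall_mem]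
  simp only [bipartiteBelow, subset_commonNeighborFinset_comm, image_subset_iff, mem_univ,
    true_imp_iff]

theorem exists_le_card_forall_le_card_commonNeighborFinset [Nonempty V] {a m r t : ℕ}
    (hr : 0 < r)
    (h : a * Fintype.card V ^ t + (Fintype.card V).choose r * m ^ t ≤ ∑ v, G.degree v ^ t) :
    ∃ U : Finset V, a ≤ #U ∧ ∀ S ⊆ U, #S = r → m ≤ #(G.commonNeighborFinset S) := by
  set 𝓑 := {S ∈ (univ : Finset V).powersetCard r | #(G.commonNeighborFinset S) < m}
  have h𝓑 : ∑ S ∈ 𝓑, #(G.commonNeighborFinset S) ^ t ≤ (Fintype.card V).choose r * m ^ t :=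
    calc ∑ S ∈ 𝓑, #(G.commonNeighborFinset S) ^ t
        ≤ ∑ S ∈ 𝓑, m ^ t := sum_le_sum fun S hS => Nat.pow_le_pow_left (mem_filter.1 hS).2.le t
      _ ≤ (Fintype.card V).choose r * m ^ t := by
        rw [sum_const, smul_eq_mul, ← card_univ, ← card_powersetCard]
        gcongr
        exact filter_subset _ _
  set X : (Fin t → V) → Finset V := fun f => G.commonNeighborFinset (univ.image f)
  obtain ⟨f, -, hf⟩ : ∃ f ∈ (univ : Finset (Fin t → V)), a + #{S ∈ 𝓑 | S ⊆ X f} ≤ #(X f) := by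
    refine exists_le_of_sum_le univ_nonempty ?_
    rw [sum_add_distrib, sum_const, card_univ, Fintype.card_fun, Fintype.card_fin, smul_eq_mul,
      sum_card_filter_subset_commonNeighborFinset_image, sum_card_commonNeighborFinset_image]
    linarith
  have hne : ∀ S ∈ {S ∈ 𝓑 | S ⊆ X f}, S.Nonempty := fun S hS =>
    card_pos.1 ((mem_powersetCard.1 (mem_filter.1 (mem_filter.1 hS).1).1).2 ▸ hr)
  obtain ⟨U, hUX, hXU, hU⟩ := exists_subset_le_card_add_card_forall_not_subset (X f) _ hne
  refine ⟨U, by omega, fun S hSU hS => ?_⟩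
  by_contra! hlt
  exact hU S (mem_filter.2 ⟨mem_filter.2 ⟨mem_powersetCard.2 ⟨subset_univ S, hS⟩, hlt⟩,
    hSU.trans hUX⟩) hSU

end SimpleGraph

theorem stmt_10_general {V : Type*} [Fintype V] [DecidableEq V]
    (G : SimpleGraph V) [DecidableRel G.Adj]
    (a m n r t : ℕ) (hn : 0 < n) (hr : 0 < r) (ht : 0 < t)
    (hcard : Fintype.card V = n) (d : ℝ)
    (hd : d = 2 * (G.edgeFinset.card : ℝ) / n)
    (hineq : (a : ℝ) ≤ d ^ t / (n : ℝ) ^ (t - 1) - (n.choose r : ℝ) * ((m : ℝ) / n) ^ t) :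
    ∃ U : Finset V, (a : ℕ) ≤ U.card ∧
      ∀ S ⊆ U, S.card = r →
        m ≤ (Finset.univ.filter (fun v => ∀ s ∈ S, G.Adj v s)).card := by
  obtain ⟨k, rfl⟩ : ∃ k, t = k + 1 := ⟨t - 1, by omega⟩
  have : Nonempty V := Fintype.card_pos_iff.mp (hcard ▸ hn)
  refine G.exists_le_card_forall_le_card_commonNeighborFinset (t := k + 1) hr ?_
  have hn' : (0 : ℝ) < n := by exact_mod_cast hn
  rw [Nat.add_sub_cancel] at hineq
  have hscaled : (a : ℝ) * n ^ (k + 1) + (n.choose r : ℝ) * m ^ (k + 1) ≤ d ^ (k + 1) * n := by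
    have hexpand : (d ^ (k + 1) / n ^ k - (n.choose r : ℝ) * (m / n) ^ (k + 1)) * n ^ (k + 1)
        = d ^ (k + 1) * n - (n.choose r : ℝ) * m ^ (k + 1) := by
      rw [div_pow, sub_mul, pow_succ (n : ℝ) k]
      field_simp
    linarith [mul_le_mul_of_nonneg_right hineq (pow_pos hn' (k + 1)).le]
  have hJensen := G.averageDegree_pow_mul_card_le_sum_degree_pow (k + 1)
  rw [hcard, ← hd] at hJensen
  rw [hcard]
  exact_mod_cast hscaled.trans hJensen

/-- Dependent random choice: if `d = 2|E(G)|/n` and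
`d^t/n^{t-1} - C(n,r)(m/n)^t ≥ a`, then `G` has a vertex set `U` of size at least `a`
every `r` vertices of which have at least `m` common neighbors. -/
theorem stmt_10 {V : Type*} [Fintype V] [DecidableEq V]
    (G : SimpleGraph V) [DecidableRel G.Adj]
    (a m n r t : ℕ) (ha : 0 < a) (hm : 0 < m) (hn : 0 < n) (hr : 0 < r) (ht : 0 < t)
    (hcard : Fintype.card V = n) (d : ℝ)
    (hd : d = 2 * (G.edgeFinset.card : ℝ) / n)
    (hineq : (a : ℝ) ≤ d ^ t / (n : ℝ) ^ (t - 1) - (n.choose r : ℝ) * ((m : ℝ) / n) ^ t) :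
    ∃ U : Finset V, (a : ℕ) ≤ U.card ∧
      ∀ S ⊆ U, S.card = r →
        m ≤ (Finset.univ.filter (fun v => ∀ s ∈ S, G.Adj v s)).card :=
  stmt_10_general G a m n r t hn hr ht hcard d hd hineq
end
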